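/- Fix k > 0, σ > 0 and let g(z) = 1/(1 + z²). For ε > 0 define u_ε(x,y) = x + ε cos(kx) and let u_{ε,σ} be the convolution of u_ε with the two-dimensional Gaussian of standard deviation σ (so ∂_x u_{ε,σ}(x) = 1 − ε k e^{−k²σ²/2} sin(kx)). For ε small let R_ε^σ(x,y) = [ |∇u_ε| div( g(|∇u_{ε,σ}|) ∇u_ε/|∇u_ε| ) ](x,y) be the pre-smoothed self-snakes right-hand side. Then, as ε → 0⁺, sup over (x,y) of | R_ε^σ(x,y) − (k² ε/2) e^{−k²σ²/2} cos(kx) | = O(ε²). (With Gaussian pre-smoothing, the frequency response factor becomes k² e^{−k²σ²/2}/2, which is globally bounded in k.) -/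

import Mathlib

open MeasureTheory Filter Topology Real

noncomputable section

abbrev Plane := EuclideanSpace ℝ (Fin 2)

/-- divergence of a planar vector field -/
def div2 (V : Plane → Plane) (x : Plane) : ℝ :=
  ∑ i : Fin 2, fderiv ℝ (fun y => V y i) x (EuclideanSpace.single i 1)

/-- the Perona–Malik edge-stopping function (β = 1) -/
def g (z : ℝ) : ℝ := 1 / (1 + z ^ 2)

/-- the perturbed slope u_ε(x,y) = x + ε cos(kx) -/
def uPert (k ε : ℝ) (p : Plane) : ℝ := p 0 + ε * Real.cos (k * p 0)

/-- the two-dimensional Gaussian kernel of standard deviation σ -/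
def gauss2 (σ : ℝ) (q : Plane) : ℝ :=
  1 / (2 * π * σ ^ 2) * Real.exp (-‖q‖ ^ 2 / (2 * σ ^ 2))

/-- Gaussian pre-smoothing: convolution with the 2D Gaussian of st.dev. σ -/
def presmooth (σ : ℝ) (u : Plane → ℝ) (p : Plane) : ℝ :=
  ∫ q : Plane, gauss2 σ q * u (p - q)

/-- the pre-smoothed self-snakes right-hand side
|∇u| div( g(|∇u_σ|) ∇u/|∇u| ) -/
def selfSnakesRHSsigma (σ : ℝ) (u : Plane → ℝ) (p : Plane) : ℝ :=
  ‖gradient u p‖ *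
    div2 (fun y =>
      (g ‖gradient (presmooth σ u) y‖ / ‖gradient u y‖) • gradient u y) p

/-!
Since `u_ε` depends on `x` alone, Fubini reduces the Gaussian smoothing to an expectation against
the one-dimensional normal law `N(x, σ²)`, and its characteristic function gives exactly
`u_{ε,σ}(x) = x + ε e^{-k²σ²/2} cos(kx)`. All gradients are then multiples of `e₀` with positive
coefficient `u_ε'`, so the normalized gradient is `e₀` and the right-hand side is the
one-dimensional expression `u_ε'(x) · (g ∘ u_{ε,σ}')'(x)`. Writing `u_{ε,σ}' = 1 - b sin(kx)`,
this is `b k cos(kx) · (1 - εk sin(kx)) · (-g')(1 - b sin(kx))` with `b = εk e^{-k²σ²/2}`, and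
`-g'(1) = 1/2`; the deviation of the last two factors from `1/2` is `O(εk)`.
-/

open ProbabilityTheory
open scoped NNReal

lemma gauss2_eq_mul_gaussianPDFReal (σ : ℝ) (q : Plane) :
    gauss2 σ q = gaussianPDFReal 0 (σ ^ 2).toNNReal (q 0) *
      gaussianPDFReal 0 (σ ^ 2).toNNReal (q 1) := by
  have hnorm : ‖q‖ ^ 2 = q 0 ^ 2 + q 1 ^ 2 := by
    simp [EuclideanSpace.norm_sq_eq, Fin.sum_univ_two]
  have hsqrt : (√(2 * π * σ ^ 2))⁻¹ * (√(2 * π * σ ^ 2))⁻¹ = 1 / (2 * π * σ ^ 2) := by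
    rw [← mul_inv, Real.mul_self_sqrt (by positivity), one_div]
  simp only [gauss2, gaussianPDFReal, Real.coe_toNNReal _ (sq_nonneg σ), sub_zero, hnorm]
  rw [← hsqrt, neg_add, add_div, Real.exp_add]
  ring

lemma presmooth_comp_apply_zero (σ : ℝ) (hσ : σ ≠ 0) (f : ℝ → ℝ) (p : Plane) :
    presmooth σ (fun q => f (q 0)) p = ∫ x, f x ∂gaussianReal (p 0) (σ ^ 2).toNNReal := by
  set v := (σ ^ 2).toNNReal
  have hv : v ≠ 0 := by simp [v, hσ]
  set F : Fin 2 → ℝ → ℝ := ![fun t => gaussianPDFReal 0 v t * f (p 0 - t), gaussianPDFReal 0 v]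
  calc presmooth σ (fun q => f (q 0)) p
      = ∫ x : Fin 2 → ℝ, ∏ i, F i (x i) := by
        rw [presmooth, ← (PiLp.volume_preserving_toLp (Fin 2)).integral_comp
          (MeasurableEquiv.toLp 2 (Fin 2 → ℝ)).measurableEmbedding]
        congr 1 with x
        simp [F, Fin.prod_univ_two, gauss2_eq_mul_gaussianPDFReal]
        ring
    _ = ∫ t, gaussianPDFReal 0 v t * f (p 0 - t) := by
        rw [integral_fintype_prod_volume_eq_prod, Fin.prod_univ_two]
        simp [F, integral_gaussianPDFReal_eq_one 0 hv]
    _ = ∫ x, gaussianPDFReal (p 0) v x * f x := by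
        rw [← integral_sub_left_eq_self _ volume (p 0)]
        congr 1 with x
        rw [sub_sub_cancel, gaussianPDFReal, gaussianPDFReal, sub_zero, ← neg_sub x (p 0), neg_sq]
    _ = ∫ x, f x ∂gaussianReal (p 0) v := (integral_gaussianReal_eq_integral_smul hv).symm

lemma integral_cos_mul_gaussianReal (k μ : ℝ) (v : ℝ≥0) :
    ∫ x, Real.cos (k * x) ∂gaussianReal μ v = Real.exp (-(v * k ^ 2) / 2) * Real.cos (k * μ) := by
  have hint : Integrable (fun x : ℝ => Complex.exp (k * x * Complex.I)) (gaussianReal μ v) :=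
    Integrable.of_bound (by fun_prop) 1 (ae_of_all _ fun x => by
      rw [← Complex.ofReal_mul, Complex.norm_exp_ofReal_mul_I])
  have h := congrArg Complex.re (charFun_gaussianReal (μ := μ) (v := v) k)
  rw [charFun_apply_real, ← RCLike.re_to_complex, ← integral_re hint] at h
  simp only [RCLike.re_to_complex, ← Complex.ofReal_mul, Complex.exp_ofReal_mul_I_re] at h
  rw [h, sub_eq_neg_add, Complex.exp_add]
  have hreal : -((v : ℂ) * k ^ 2 / 2) = ((-(v * k ^ 2) / 2 : ℝ) : ℂ) := by push_cast; ring
  rw [hreal, ← Complex.ofReal_exp, Complex.re_ofReal_mul, Complex.exp_ofReal_mul_I_re]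

lemma presmooth_uPert (k ε : ℝ) {σ : ℝ} (hσ : σ ≠ 0) :
    presmooth σ (uPert k ε) =
      fun p => p 0 + ε * Real.exp (-(k ^ 2 * σ ^ 2) / 2) * Real.cos (k * p 0) := by
  ext p
  have hcos : Integrable (fun x => ε * Real.cos (k * x)) (gaussianReal (p 0) (σ ^ 2).toNNReal) :=
    (Integrable.of_bound (by fun_prop) 1
      (ae_of_all _ fun x => by simpa using Real.abs_cos_le_one _)).const_mul ε
  have hid : Integrable (fun x => x) (gaussianReal (p 0) (σ ^ 2).toNNReal) :=
    (memLp_id_gaussianReal 1).integrable le_rfl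
  rw [show uPert k ε = fun q => (fun x => x + ε * Real.cos (k * x)) (q 0) from rfl,
    presmooth_comp_apply_zero σ hσ (fun x => x + ε * Real.cos (k * x)),
    integral_add hid hcos, integral_const_mul,
    integral_id_gaussianReal, integral_cos_mul_gaussianReal, Real.coe_toNNReal _ (sq_nonneg σ)]
  ring_nf

lemma hasDerivAt_add_mul_cos (c k x : ℝ) :
    HasDerivAt (fun x => x + c * Real.cos (k * x)) (1 - c * k * Real.sin (k * x)) x :=
  ((hasDerivAt_id' x).add (((hasDerivAt_id' x).const_mul k).cos.const_mul c)).congr_deriv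
    (by ring)

lemma hasDerivAt_g (z : ℝ) : HasDerivAt g (-(2 * z) / (1 + z ^ 2) ^ 2) z := by
  rw [show g = fun z => (1 + z ^ 2)⁻¹ from funext fun z => one_div _]
  exact (((hasDerivAt_pow 2 z).const_add 1).inv (by positivity)).congr_deriv (by norm_num)

section Coordinate

variable {ι : Type*} [Fintype ι] [DecidableEq ι]

lemma hasGradientAt_comp_apply {φ : ℝ → ℝ} {φ' : ℝ} {p : EuclideanSpace ℝ ι} {i : ι}
    (h : HasDerivAt φ φ' (p i)) :
    HasGradientAt (fun q : EuclideanSpace ℝ ι => φ (q i)) (φ' • EuclideanSpace.single i 1) p := by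
  rw [hasGradientAt_iff_hasFDerivAt]
  refine (h.comp_hasFDerivAt p
    (EuclideanSpace.proj i : EuclideanSpace ℝ ι →L[ℝ] ℝ).hasFDerivAt).congr_fderiv ?_
  ext w
  simp [EuclideanSpace.inner_single_left]

lemma norm_smul_single (r : ℝ) (i : ι) : ‖r • EuclideanSpace.single i (1 : ℝ)‖ = |r| := by
  simp [norm_smul]

end Coordinate

lemma div2_comp_apply_zero_smul_single {ψ : ℝ → ℝ} {ψ' : ℝ} {p : Plane}
    (h : HasDerivAt ψ ψ' (p 0)) : div2 (fun y => ψ (y 0) • EuclideanSpace.single 0 1) p = ψ' := by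
  have hF : HasFDerivAt (fun y : Plane => ψ (y 0))
      (ψ' • (EuclideanSpace.proj 0 : Plane →L[ℝ] ℝ)) p :=
    h.comp_hasFDerivAt p (EuclideanSpace.proj 0 : Plane →L[ℝ] ℝ).hasFDerivAt
  simp [div2, Fin.sum_univ_two, hF.fderiv]

lemma g_abs (z : ℝ) : g |z| = g z := by
  simp [g, sq_abs]

lemma selfSnakesRHSsigma_comp_apply_zero {σ : ℝ} {φ φ' χ χ' : ℝ → ℝ} {d : ℝ} {p : Plane}
    (hφ : ∀ x, HasDerivAt φ (φ' x) x) (hφ' : ∀ x, 0 < φ' x)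
    (hχ : presmooth σ (fun q => φ (q 0)) = fun q => χ (q 0)) (hχ' : ∀ x, HasDerivAt χ (χ' x) x)
    (hd : HasDerivAt (fun x => g (χ' x)) d (p 0)) :
    selfSnakesRHSsigma σ (fun q => φ (q 0)) p = φ' (p 0) * d := by
  have hgrad (y : Plane) : gradient (fun q => φ (q 0)) y = φ' (y 0) • EuclideanSpace.single 0 1 :=
    (hasGradientAt_comp_apply (hφ _)).gradient
  have hgradσ (y : Plane) :
      gradient (presmooth σ (fun q => φ (q 0))) y = χ' (y 0) • EuclideanSpace.single 0 1 := by
    rw [hχ]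
    exact (hasGradientAt_comp_apply (hχ' _)).gradient
  have hfield : (fun y => (g ‖gradient (presmooth σ (fun q => φ (q 0))) y‖ /
        ‖gradient (fun q => φ (q 0)) y‖) • gradient (fun q => φ (q 0)) y) =
      fun y => g (χ' (y 0)) • EuclideanSpace.single 0 1 := by
    ext1 y
    rw [hgrad, hgradσ, norm_smul_single, norm_smul_single, abs_of_pos (hφ' _), smul_smul,
      div_mul_cancel₀ _ (hφ' _).ne', g_abs]
  rw [selfSnakesRHSsigma, hfield, div2_comp_apply_zero_smul_single hd, hgrad, norm_smul_single,
    abs_of_pos (hφ' _)]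

lemma selfSnakesRHSsigma_uPert (k ε : ℝ) {σ : ℝ} (hσ : σ ≠ 0) (hεk : |ε * k| < 1) (p : Plane) :
    selfSnakesRHSsigma σ (uPert k ε) p =
      (1 - ε * k * Real.sin (k * p 0)) *
        (2 * (1 - ε * Real.exp (-(k ^ 2 * σ ^ 2) / 2) * k * Real.sin (k * p 0)) /
          (1 + (1 - ε * Real.exp (-(k ^ 2 * σ ^ 2) / 2) * k * Real.sin (k * p 0)) ^ 2) ^ 2 *
        (ε * Real.exp (-(k ^ 2 * σ ^ 2) / 2) * k * k * Real.cos (k * p 0))) := by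
  set c := ε * Real.exp (-(k ^ 2 * σ ^ 2) / 2)
  have hpos (x : ℝ) : 0 < 1 - ε * k * Real.sin (k * x) := by
    have : |ε * k * Real.sin (k * x)| < 1 := by
      rw [abs_mul]
      nlinarith [abs_nonneg (ε * k), Real.abs_sin_le_one (k * x), abs_nonneg (Real.sin (k * x))]
    linarith [le_abs_self (ε * k * Real.sin (k * x))]
  have hw := (((hasDerivAt_id' (p 0)).const_mul k).sin.const_mul (c * k)).const_sub 1
  refine (selfSnakesRHSsigma_comp_apply_zero (hasDerivAt_add_mul_cos ε k) hpos
    (presmooth_uPert k ε hσ) (hasDerivAt_add_mul_cos c k) ((hasDerivAt_g _).comp _ hw)).trans ?_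
  ring

lemma abs_mul_two_mul_div_sq_sub_half_le {a b s : ℝ} (ha : a ≤ 1 / 2) (hb : 0 ≤ b) (hba : b ≤ a)
    (hs : |s| ≤ 1) :
    |(1 - a * s) * (2 * (1 - b * s) / (1 + (1 - b * s) ^ 2) ^ 2) - 1 / 2| ≤ 5 * a := by
  set v := 1 - a * s
  set w := 1 - b * s
  have hbs : |b * s| ≤ a := by
    rw [abs_mul, abs_of_nonneg hb]
    nlinarith [abs_nonneg s]
  have hvw : |v - w| ≤ a := by
    rw [show v - w = (b - a) * s by ring, abs_mul, abs_of_nonpos (by linarith)]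
    nlinarith [abs_nonneg s]
  have hw : |w| ≤ 3 / 2 := by
    have := abs_le.mp hbs
    rw [abs_le]; constructor <;> linarith
  have hw2 : |1 - w ^ 2| ≤ 5 / 2 * a := by
    have := abs_le.mp hbs
    rw [show 1 - w ^ 2 = b * s * (2 - b * s) by ring, abs_mul,
      abs_of_pos (by linarith : (0 : ℝ) < 2 - b * s)]
    nlinarith [abs_nonneg (b * s)]
  have hD : 1 ≤ (1 + w ^ 2) ^ 2 := one_le_pow₀ (by nlinarith)
  -- `2w / (1 + w²)² = -g'(w)`, and `(1 + w²)² - 4w² = (1 - w²)²`.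
  have hid : v * (2 * w / (1 + w ^ 2) ^ 2) - 1 / 2 =
      (4 * w * (v - w) - (1 - w ^ 2) ^ 2) / (2 * (1 + w ^ 2) ^ 2) := by
    field_simp
    ring
  have hnum : |4 * w * (v - w) - (1 - w ^ 2) ^ 2| ≤ 10 * a := by
    calc |4 * w * (v - w) - (1 - w ^ 2) ^ 2|
        ≤ 4 * |w| * |v - w| + |1 - w ^ 2| ^ 2 := by
          refine (abs_sub _ _).trans ?_
          rw [abs_mul, abs_mul, abs_pow, abs_of_pos four_pos]
      _ ≤ 4 * (3 / 2) * a + (5 / 2 * a) ^ 2 := by gcongr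
      _ ≤ 10 * a := by nlinarith
  rw [hid, abs_div, abs_of_pos (by positivity : (0 : ℝ) < 2 * (1 + w ^ 2) ^ 2)]
  rw [div_le_iff₀ (by positivity)]
  nlinarith [abs_nonneg (4 * w * (v - w) - (1 - w ^ 2) ^ 2)]

/-- With Gaussian pre-smoothing of standard deviation σ, a gradient-aligned
oscillation of frequency k on a unit slope is amplified with the globally bounded
frequency response factor k² e^{−k²σ²/2}/2, up to a uniform O(ε²) error. -/
theorem presmoothed_self_snakes_frequency_response (k σ : ℝ) (hk : 0 < k) (hσ : 0 < σ) :
    ∃ C : ℝ, ∀ᶠ ε in 𝓝[>] (0:ℝ), ∀ p : Plane,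
      |selfSnakesRHSsigma σ (uPert k ε) p -
          k ^ 2 * ε / 2 * Real.exp (-(k ^ 2 * σ ^ 2) / 2) * Real.cos (k * p 0)|
        ≤ C * ε ^ 2 := by
  refine ⟨5 * k ^ 3, ?_⟩
  filter_upwards [Ioo_mem_nhdsGT (by positivity : (0 : ℝ) < 1 / (2 * k))] with ε ⟨hε, hεk⟩ p
  have ha : ε * k ≤ 1 / 2 := by
    rw [lt_div_iff₀ (by positivity)] at hεk
    linarith
  rw [selfSnakesRHSsigma_uPert k ε hσ.ne' (by rw [abs_of_pos (by positivity)]; linarith)]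
  set E := Real.exp (-(k ^ 2 * σ ^ 2) / 2)
  have hE : E ≤ 1 := Real.exp_le_one_iff.mpr (by nlinarith)
  have hb : ε * E * k ≤ ε * k := by nlinarith [mul_pos hε hk]
  have hcos : |ε * E * k * k * Real.cos (k * p 0)| ≤ ε * k * k := by
    rw [abs_mul, abs_of_pos (by positivity)]
    exact (mul_le_of_le_one_right (by positivity) (Real.abs_cos_le_one _)).trans
      (mul_le_mul_of_nonneg_right hb hk.le)
  calc _ = |ε * E * k * k * Real.cos (k * p 0)| *
        |(1 - ε * k * Real.sin (k * p 0)) * (2 * (1 - ε * E * k * Real.sin (k * p 0)) /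
          (1 + (1 - ε * E * k * Real.sin (k * p 0)) ^ 2) ^ 2) - 1 / 2| := by
        rw [← abs_mul]
        congr 1
        ring
    _ ≤ (ε * k * k) * (5 * (ε * k)) :=
        mul_le_mul hcos (abs_mul_two_mul_div_sq_sub_half_le ha (by positivity) hb
          (Real.abs_sin_le_one _)) (abs_nonneg _) (by positivity)
    _ = 5 * k ^ 3 * ε ^ 2 := by ring
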